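/- Let (n_j) and (m_j) be sequences of integers > 1 with (m_j + 2)·j < n_j for all j ≥ 1, and let K₁, K₂ be the associated Knaster continua. For each t ∈ [0,1] there exists a sequence of continuous surjections f^t_j : [0,1] → [0,1] (j ≥ 0) with f^t_0 = id such that for all j ≥ 1: f^t_j(0) = 0; f^t_{j-1} ∘ g_{n_j} = g_{m_j} ∘ f^t_j; f^t_j([0, i[t,j]/j]) ⊆ [0, 1/m_j]; f^t_j([i[t,j]/j, (i[t,j]+1)/j]) = [0,1]; and f^t_j([(i[t,j]+1)/j, 1]) ⊆ [(m_j−1)/m_j, 1], where i[t,j] is an integer with 0 ≤ i[t,j] < j and t ∈ [i[t,j]/j, (i[t,j]+1)/j]. Consequently there is a continuous surjection f^t : K₁ → K₂ with f^t(e) = e, where e = (0,0,…). -/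

import Mathlib

/-
Write `v = vmap`. Given `f` continuous with `f 0 = 0` and `f x = 1` for some `x ∈ [0, 1]`, the map
`f ∘ v` has a continuous lift `L` through `v` with `L (u + 2) = L u + 2`; it reaches the integer
`m` at some `a ∈ (0, m]`. For an even `K`, set `u = n s - K` and let `B u` be `L u` on `[0, a]`,
folded by `v` into `[0, 1]` for `u ≤ 0` and into `[m, m + 1]` for `u ≥ a`. Then
`f' s = v (B u / m)` satisfies `g_m ∘ f' = v ∘ B = f ∘ g_n`; it is at most `1 / m` on
`[0, K / n]`, covers `[0, 1]` on `[K / n, (K + a) / n]`, and is at least `(m - 1) / m` beyond. Since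
`(m + 2) J < n`, an even `K` with `[K / n, (K + m) / n]` inside the cell `[i / J, (i + 1) / J]`
containing `t` exists, and `f'` again hits `1`, so the construction iterates.

The induced map of Knaster continua is onto: for `y` in the target, the threads `x` with
`f_N (x N) = y N` form a decreasing sequence of nonempty compact sets.
-/

open Set

noncomputable def vmap (t : ℝ) : ℝ :=
  if Even ⌊t⌋ then t - ⌊t⌋ else ⌊t⌋ + 1 - t

noncomputable def gmap (n : ℕ) (t : ℝ) : ℝ := vmap (n * t)

def Knaster (n : ℕ → ℕ) : Set (ℕ → ℝ) :=
  {x | (∀ j, x j ∈ Icc (0:ℝ) 1) ∧ ∀ j, x j = gmap (n j) (x (j + 1))}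

lemma vmap_eq_self {t : ℝ} (ht : t ∈ Icc (0:ℝ) 1) : vmap t = t := by
  rcases ht.2.eq_or_lt with rfl | h1
  · norm_num [vmap]
  · simp [vmap, Int.floor_eq_zero_iff.2 ⟨ht.1, h1⟩]

lemma vmap_zero : vmap 0 = 0 := vmap_eq_self ⟨le_rfl, zero_le_one⟩

lemma vmap_one : vmap 1 = 1 := vmap_eq_self ⟨zero_le_one, le_rfl⟩

lemma exists_vmap_eq (t : ℝ) : ∃ e : ℤ, vmap t = t - 2 * e ∨ vmap t = 2 * e - t := by
  rcases Int.even_or_odd' ⌊t⌋ with ⟨k, hk | hk⟩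
  · exact ⟨k, Or.inl (by simp [vmap, hk])⟩
  · refine ⟨k + 1, Or.inr ?_⟩
    simp only [vmap, hk, Int.not_even_two_mul_add_one, if_false]
    push_cast; ring

lemma vmap_eq_one_sub_abs (t : ℝ) : vmap t = 1 - |2 * Int.fract (t / 2) - 1| := by
  have ht : t = 2 * ⌊t / 2⌋ + 2 * Int.fract (t / 2) := by rw [Int.fract]; ring
  have h0 := Int.fract_nonneg (t / 2)
  have h1 := Int.fract_lt_one (t / 2)
  rcases lt_or_ge (Int.fract (t / 2)) (1 / 2) with h | h
  · have hfl : ⌊t⌋ = 2 * ⌊t / 2⌋ :=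
      Int.floor_eq_iff.2 ⟨by push_cast; linarith, by push_cast; linarith⟩
    rw [vmap, hfl, if_pos (even_two_mul _), abs_of_neg (by linarith)]
    push_cast; linarith
  · have hfl : ⌊t⌋ = 2 * ⌊t / 2⌋ + 1 :=
      Int.floor_eq_iff.2 ⟨by push_cast; linarith, by push_cast; linarith⟩
    rw [vmap, hfl, if_neg (Int.not_even_two_mul_add_one _), abs_of_nonneg (by linarith)]
    push_cast; linarith

lemma vmap_mem_Icc (t : ℝ) : vmap t ∈ Icc (0:ℝ) 1 := by
  have h0 := Int.fract_nonneg (t / 2)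
  have h1 := Int.fract_lt_one (t / 2)
  have habs : |2 * Int.fract (t / 2) - 1| ≤ 1 := abs_le.2 ⟨by linarith, by linarith⟩
  rw [vmap_eq_one_sub_abs]
  exact ⟨by linarith, by linarith [abs_nonneg (2 * Int.fract (t / 2) - 1)]⟩

@[fun_prop]
lemma continuous_vmap : Continuous vmap := by
  have h : Continuous ((fun y : ℝ => 1 - |2 * y - 1|) ∘ Int.fract) :=
    ContinuousOn.comp_fract'' (by fun_prop) (by norm_num)
  simpa [Function.comp_def, ← vmap_eq_one_sub_abs] using h.comp (continuous_id.div_const 2)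

lemma vmap_periodic : Function.Periodic vmap 2 := fun t => by
  rw [vmap_eq_one_sub_abs, vmap_eq_one_sub_abs, add_div, div_self two_ne_zero, Int.fract_add_one]

lemma vmap_neg (t : ℝ) : vmap (-t) = vmap t := by
  rw [vmap_eq_one_sub_abs, vmap_eq_one_sub_abs, neg_div]
  by_cases h : Int.fract (t / 2) = 0
  · rw [Int.fract_neg_eq_zero.2 h, h]
  · rw [Int.fract_neg h, abs_sub_comm]; ring_nf

lemma vmap_intCast_mul_vmap (k : ℤ) (t : ℝ) : vmap (k * vmap t) = vmap (k * t) := by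
  obtain ⟨e, he | he⟩ := exists_vmap_eq t <;> rw [he]
  · rw [show (k : ℝ) * (t - 2 * e) = k * t + ((-(k * e) : ℤ) : ℝ) * 2 by push_cast; ring,
      (vmap_periodic.int_mul _) _]
  · rw [show (k : ℝ) * (2 * e - t) = -(k * t) + ((k * e : ℤ) : ℝ) * 2 by push_cast; ring,
      (vmap_periodic.int_mul _) _, vmap_neg]

lemma vmap_natCast_mul_vmap (k : ℕ) (t : ℝ) : vmap (k * vmap t) = vmap (k * t) := by
  exact_mod_cast vmap_intCast_mul_vmap k t

lemma vmap_intCast_add_vmap (k : ℤ) (t : ℝ) : vmap (k + vmap t) = vmap (k + t) := by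
  obtain ⟨e, he | he⟩ := exists_vmap_eq t <;> rw [he]
  · rw [show (k : ℝ) + (t - 2 * e) = k + t + ((-e : ℤ) : ℝ) * 2 by push_cast; ring,
      (vmap_periodic.int_mul _) _]
  · rw [show (k : ℝ) + (2 * e - t) = -(k + t) + ((k + e : ℤ) : ℝ) * 2 by push_cast; ring,
      (vmap_periodic.int_mul _) _, vmap_neg]

lemma vmap_eq_two_sub {t : ℝ} (ht : t ∈ Icc (1:ℝ) 2) : vmap t = 2 - t := by
  rw [← vmap_periodic.sub_eq, ← vmap_neg, neg_sub,
    vmap_eq_self ⟨by linarith [ht.2], by linarith [ht.1]⟩]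

lemma vmap_sub_natCast_of_even {K : ℕ} (hK : Even K) (y : ℝ) : vmap (y - K) = vmap y := by
  obtain ⟨r, rfl⟩ := hK
  rw [show ((r + r : ℕ) : ℝ) = ((r : ℤ) : ℝ) * 2 by push_cast; ring,
    vmap_periodic.sub_int_mul_eq]

@[fun_prop]
lemma continuous_gmap (n : ℕ) : Continuous (gmap n) := by
  unfold gmap; fun_prop

structure HitsOneAt (f : ℝ → ℝ) (x : ℝ) : Prop where
  continuous : Continuous f
  map_zero : f 0 = 0
  mapsTo : MapsTo f (Icc 0 1) (Icc 0 1)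
  mem : x ∈ Icc (0:ℝ) 1
  apply_eq_one : f x = 1

lemma HitsOneAt.pos {f : ℝ → ℝ} {x : ℝ} (hf : HitsOneAt f x) : 0 < x :=
  hf.mem.1.lt_of_ne <| by rintro rfl; simpa [hf.map_zero] using hf.apply_eq_one

lemma HitsOneAt.image_Icc {f : ℝ → ℝ} {x : ℝ} (hf : HitsOneAt f x) :
    f '' Icc 0 1 = Icc 0 1 := by
  refine Subset.antisymm (mapsTo_iff_image_subset.1 hf.mapsTo) ?_
  have hivt := intermediate_value_Icc hf.mem.1 hf.continuous.continuousOn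
  rw [hf.map_zero, hf.apply_eq_one] at hivt
  exact hivt.trans (image_mono (Icc_subset_Icc le_rfl hf.mem.2))

/- On `[0, 2]` the lift follows `f ∘ vmap` up to `x` and `2 - f ∘ vmap` after it, so it climbs
from `0` through `f x = 1` to `2`; `vmapLift` extends it by `vmapLift (u + 2) = vmapLift u + 2`. -/
noncomputable def liftProfile (f : ℝ → ℝ) (x y : ℝ) : ℝ :=
  if y ≤ x then f (vmap y) else 2 - f (vmap y)

noncomputable def vmapLift (f : ℝ → ℝ) (x u : ℝ) : ℝ :=
  u + (liftProfile f x (2 * Int.fract (u / 2)) - 2 * Int.fract (u / 2))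

noncomputable def liftPoint (m : ℕ) (x : ℝ) : ℝ :=
  if Even m then m else m - 1 + x

namespace HitsOneAt

variable {f : ℝ → ℝ} {x : ℝ}

lemma liftProfile_zero (hf : HitsOneAt f x) : liftProfile f x 0 = 0 := by
  rw [liftProfile, if_pos hf.mem.1, vmap_zero, hf.map_zero]

lemma liftProfile_two (hf : HitsOneAt f x) : liftProfile f x 2 = 2 := by
  rw [liftProfile, if_neg (by linarith [hf.mem.2]), ← zero_add 2, vmap_periodic, vmap_zero,
    hf.map_zero]
  norm_num

lemma continuous_liftProfile (hf : HitsOneAt f x) : Continuous (liftProfile f x) := by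
  have := hf.continuous
  refine Continuous.if_le (by fun_prop) (by fun_prop) continuous_id continuous_const ?_
  rintro y rfl
  rw [vmap_eq_self hf.mem, hf.apply_eq_one]
  norm_num

lemma vmap_liftProfile (hf : HitsOneAt f x) (y : ℝ) :
    vmap (liftProfile f x y) = f (vmap y) := by
  have hy := hf.mapsTo (vmap_mem_Icc y)
  unfold liftProfile
  split_ifs
  · exact vmap_eq_self hy
  · rw [vmap_periodic.sub_eq', vmap_neg, vmap_eq_self hy]

lemma vmapLift_add_two_mul (u : ℝ) (k : ℤ) :
    vmapLift f x (u + 2 * k) = vmapLift f x u + 2 * k := by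
  rw [vmapLift, vmapLift, show (u + 2 * k) / 2 = u / 2 + k by ring, Int.fract_add_intCast]
  ring

lemma vmapLift_of_mem_Ico {y : ℝ} (hy : y ∈ Ico (0:ℝ) 2) :
    vmapLift f x y = liftProfile f x y := by
  rw [vmapLift, Int.fract_eq_self.2 ⟨by linarith [hy.1], by linarith [hy.2]⟩,
    mul_div_cancel₀ y two_ne_zero]
  ring

lemma continuous_vmapLift (hf : HitsOneAt f x) : Continuous (vmapLift f x) := by
  have hprofile : Continuous fun z => liftProfile f x (2 * z) - 2 * z :=
    (hf.continuous_liftProfile.comp (by fun_prop)).sub (by fun_prop)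
  have hperiodic : Continuous ((fun z => liftProfile f x (2 * z) - 2 * z) ∘ Int.fract) :=
    hprofile.continuousOn.comp_fract'' (by simp [hf.liftProfile_zero, hf.liftProfile_two])
  exact continuous_id.add (hperiodic.comp (continuous_id.div_const 2))

lemma vmap_vmapLift (hf : HitsOneAt f x) (u : ℝ) : vmap (vmapLift f x u) = f (vmap u) := by
  set y := 2 * Int.fract (u / 2)
  have hy : y ∈ Ico (0:ℝ) 2 :=
    ⟨by positivity, by linarith [Int.fract_lt_one (u / 2)]⟩
  have hu : u = y + 2 * (⌊u / 2⌋ : ℤ) := by simp only [y, Int.fract]; ring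
  rw [hu, vmapLift_add_two_mul, vmapLift_of_mem_Ico hy, mul_comm, vmap_periodic.int_mul,
    vmap_periodic.int_mul, vmap_liftProfile hf]

lemma vmapLift_zero (hf : HitsOneAt f x) : vmapLift f x 0 = 0 := by
  rw [vmapLift_of_mem_Ico ⟨le_rfl, two_pos⟩, hf.liftProfile_zero]

lemma vmapLift_self (hf : HitsOneAt f x) : vmapLift f x x = 1 := by
  rw [vmapLift_of_mem_Ico ⟨hf.mem.1, by linarith [hf.mem.2]⟩, liftProfile, if_pos le_rfl,
    vmap_eq_self hf.mem, hf.apply_eq_one]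

lemma vmapLift_liftPoint (hf : HitsOneAt f x) (m : ℕ) : vmapLift f x (liftPoint m x) = m := by
  rcases Nat.even_or_odd' m with ⟨k, rfl | rfl⟩
  · have h := vmapLift_add_two_mul (f := f) (x := x) 0 k
    rw [zero_add, vmapLift_zero hf] at h
    simpa [liftPoint] using h
  · have h := vmapLift_add_two_mul (f := f) (x := x) x k
    rw [vmapLift_self hf] at h
    rw [liftPoint, if_neg (Nat.not_even_iff_odd.2 (odd_two_mul_add_one k))]
    push_cast at h ⊢
    rw [show 2 * (k : ℝ) + 1 - 1 + x = x + 2 * k by ring, h]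
    ring

lemma liftPoint_pos (hf : HitsOneAt f x) {m : ℕ} (hm : 0 < m) : 0 < liftPoint m x := by
  have := hf.pos
  have hm' : (1:ℝ) ≤ m := by exact_mod_cast hm
  unfold liftPoint
  split_ifs <;> linarith

lemma liftPoint_le (hf : HitsOneAt f x) (m : ℕ) : liftPoint m x ≤ m := by
  have := hf.mem.2
  unfold liftPoint
  split_ifs <;> linarith

end HitsOneAt

noncomputable def foldOutside (L : ℝ → ℝ) (a m u : ℝ) : ℝ :=
  if u ≤ 0 then vmap (L u) else if u ≤ a then L u else m + vmap (L u - m)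

section foldOutside

variable {L : ℝ → ℝ} {a : ℝ}

lemma vmap_foldOutside (k : ℤ) (u : ℝ) : vmap (foldOutside L a k u) = vmap (L u) := by
  unfold foldOutside
  split_ifs
  · exact vmap_eq_self (vmap_mem_Icc _)
  · rfl
  · rw [vmap_intCast_add_vmap, add_sub_cancel]

lemma continuous_foldOutside {m : ℝ} (hL : Continuous L) (hL0 : L 0 = 0) (ha : 0 ≤ a)
    (hLa : L a = m) : Continuous (foldOutside L a m) := by
  refine Continuous.if_le (by fun_prop) ?_ continuous_id continuous_const ?_
  · refine Continuous.if_le hL (by fun_prop) continuous_id continuous_const ?_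
    rintro u rfl
    rw [hLa, sub_self, vmap_zero, add_zero]
  · rintro u rfl
    rw [if_pos ha, hL0, vmap_zero]

lemma foldOutside_of_nonpos {m u : ℝ} (hu : u ≤ 0) : foldOutside L a m u = vmap (L u) :=
  if_pos hu

lemma foldOutside_mem_of_ge {m u : ℝ} (ha : 0 < a) (hLa : L a = m) (hu : a ≤ u) :
    foldOutside L a m u ∈ Icc m (m + 1) := by
  rcases hu.eq_or_lt with rfl | hu
  · rw [foldOutside, if_neg ha.not_ge, if_pos le_rfl, hLa]
    exact ⟨le_rfl, by linarith⟩
  · rw [foldOutside, if_neg (ha.trans hu).not_ge, if_neg hu.not_ge]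
    have := vmap_mem_Icc (L u - m)
    exact ⟨by linarith [this.1], by linarith [this.2]⟩

end foldOutside

noncomputable def nextMap (f : ℝ → ℝ) (x : ℝ) (n m K : ℕ) (s : ℝ) : ℝ :=
  vmap (foldOutside (vmapLift f x) (liftPoint m x) m (n * s - K) / m)

noncomputable def nextPoint (x : ℝ) (n m K : ℕ) : ℝ :=
  (K + liftPoint m x) / n

namespace HitsOneAt

variable {f : ℝ → ℝ} {x : ℝ} {n m K : ℕ}

lemma semiconj_nextMap (hf : HitsOneAt f x) (hm : 0 < m) (hK : Even K) (s : ℝ) :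
    f (gmap n s) = gmap m (nextMap f x n m K s) := by
  have hm' : ((m : ℤ) : ℝ) ≠ 0 := by exact_mod_cast hm.ne'
  rw [gmap, gmap, nextMap, ← Int.cast_natCast m, vmap_intCast_mul_vmap, mul_div_cancel₀ _ hm',
    vmap_foldOutside, vmap_vmapLift hf, vmap_sub_natCast_of_even hK]

lemma nextMap_of_le (hf : HitsOneAt f x) (hm : 0 < m) (hn : 0 < n) (hK : Even K) {s : ℝ}
    (hs : s ≤ K / n) : nextMap f x n m K s = f (gmap n s) / m := by
  have hn' : (0 : ℝ) < n := by exact_mod_cast hn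
  have hm' : (1 : ℝ) ≤ m := by exact_mod_cast hm
  have hu : (n : ℝ) * s - K ≤ 0 := by rw [le_div_iff₀ hn'] at hs; linarith
  have hw := hf.mapsTo (vmap_mem_Icc (n * s))
  have hwm : f (vmap (n * s)) / m ∈ Icc (0:ℝ) 1 :=
    ⟨div_nonneg hw.1 (by linarith), (div_le_one (by linarith)).2 (by linarith [hw.2])⟩
  rw [nextMap, foldOutside_of_nonpos hu, vmap_vmapLift hf, vmap_sub_natCast_of_even hK, gmap,
    vmap_eq_self hwm]

lemma nextMap_mem_of_le (hf : HitsOneAt f x) (hm : 0 < m) (hn : 0 < n) (hK : Even K) {s : ℝ}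
    (hs : s ≤ K / n) : nextMap f x n m K s ∈ Icc 0 (1 / (m : ℝ)) := by
  have hw := hf.mapsTo (vmap_mem_Icc (n * s))
  rw [nextMap_of_le hf hm hn hK hs]
  exact ⟨div_nonneg hw.1 m.cast_nonneg, div_le_div_of_nonneg_right hw.2 m.cast_nonneg⟩

lemma nextMap_zero (hf : HitsOneAt f x) (hm : 0 < m) (hn : 0 < n) (hK : Even K) :
    nextMap f x n m K 0 = 0 := by
  rw [nextMap_of_le hf hm hn hK (by positivity), gmap, mul_zero, vmap_zero, hf.map_zero, zero_div]

lemma nextMap_natCast_div (hf : HitsOneAt f x) (hm : 0 < m) (hn : 0 < n) (hK : Even K) :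
    nextMap f x n m K (K / n) = 0 := by
  have hn' : (n : ℝ) ≠ 0 := by exact_mod_cast hn.ne'
  rw [nextMap_of_le hf hm hn hK le_rfl, gmap, mul_div_cancel₀ _ hn', ← zero_add (K : ℝ),
    ← vmap_sub_natCast_of_even hK, add_sub_cancel_right, vmap_zero, hf.map_zero, zero_div]

lemma nextMap_nextPoint (hf : HitsOneAt f x) (hm : 0 < m) (hn : 0 < n) :
    nextMap f x n m K (nextPoint x n m K) = 1 := by
  have hn' : (n : ℝ) ≠ 0 := by exact_mod_cast hn.ne'
  have hm' : (m : ℝ) ≠ 0 := by exact_mod_cast hm.ne'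
  have ha := hf.liftPoint_pos hm
  rw [nextMap, nextPoint, mul_div_cancel₀ _ hn', add_sub_cancel_left, foldOutside,
    if_neg ha.not_ge, if_pos le_rfl, vmapLift_liftPoint hf, div_self hm', vmap_one]

lemma nextMap_mem_of_ge (hf : HitsOneAt f x) (hm : 0 < m) (hn : 0 < n) {s : ℝ}
    (hs : nextPoint x n m K ≤ s) : nextMap f x n m K s ∈ Icc (((m : ℝ) - 1) / m) 1 := by
  have hn' : (0 : ℝ) < n := by exact_mod_cast hn
  have hm' : (0 : ℝ) < m := by exact_mod_cast hm
  have hu : liftPoint m x ≤ n * s - K := by rw [nextPoint, div_le_iff₀ hn'] at hs; linarith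
  have hB := foldOutside_mem_of_ge (hf.liftPoint_pos hm) (vmapLift_liftPoint hf m) hu
  have hB1 : 1 ≤ foldOutside (vmapLift f x) (liftPoint m x) m (n * s - K) / m := by
    rw [le_div_iff₀ hm']; linarith [hB.1]
  have hB2 : foldOutside (vmapLift f x) (liftPoint m x) m (n * s - K) / m ≤ 1 + 1 / m := by
    rw [div_le_iff₀ hm', add_mul, one_div_mul_cancel hm'.ne']; linarith [hB.2]
  have h1m : 1 / (m : ℝ) ≤ 1 := by rw [div_le_one hm']; exact_mod_cast hm
  rw [nextMap, vmap_eq_two_sub ⟨hB1, by linarith⟩, sub_div, div_self hm'.ne']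
  exact ⟨by linarith, by linarith⟩

lemma continuous_nextMap (hf : HitsOneAt f x) (hm : 0 < m) :
    Continuous (nextMap f x n m K) := by
  have hfold := continuous_foldOutside hf.continuous_vmapLift hf.vmapLift_zero
    (hf.liftPoint_pos hm).le (hf.vmapLift_liftPoint m)
  unfold nextMap
  fun_prop

lemma nextPoint_mem (hf : HitsOneAt f x) (hm : 0 < m) :
    nextPoint x n m K ∈ Icc ((K : ℝ) / n) ((K + m) / n) :=
  ⟨div_le_div_of_nonneg_right (by linarith [hf.liftPoint_pos hm]) n.cast_nonneg,
    div_le_div_of_nonneg_right (by linarith [hf.liftPoint_le m]) n.cast_nonneg⟩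

lemma nextMap_hitsOneAt (hf : HitsOneAt f x) (hm : 0 < m) (hn : 0 < n) (hK : Even K)
    (hKm : ((K : ℝ) + m) / n ≤ 1) : HitsOneAt (nextMap f x n m K) (nextPoint x n m K) where
  continuous := hf.continuous_nextMap hm
  map_zero := hf.nextMap_zero hm hn hK
  mapsTo _ _ := vmap_mem_Icc _
  mem := ⟨(div_nonneg K.cast_nonneg n.cast_nonneg).trans (hf.nextPoint_mem hm).1,
    (hf.nextPoint_mem hm).2.trans hKm⟩
  apply_eq_one := hf.nextMap_nextPoint hm hn

lemma image_nextMap_Icc (hf : HitsOneAt f x) (hm : 0 < m) (hn : 0 < n) (hK : Even K) {p q : ℝ}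
    (hp : p ≤ K / n) (hq : (K + m) / n ≤ q) : nextMap f x n m K '' Icc p q = Icc 0 1 := by
  refine Subset.antisymm (image_subset_iff.2 fun _ _ => vmap_mem_Icc _) ?_
  have hivt := intermediate_value_Icc (hf.nextPoint_mem (n := n) (K := K) hm).1
    (hf.continuous_nextMap (n := n) (K := K) hm).continuousOn
  rw [hf.nextMap_natCast_div hm hn hK, hf.nextMap_nextPoint hm hn] at hivt
  exact hivt.trans (image_mono (Icc_subset_Icc hp ((hf.nextPoint_mem hm).2.trans hq)))

end HitsOneAt

lemma isClosed_knaster (n : ℕ → ℕ) : IsClosed (Knaster n) := by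
  have h : Knaster n = (⋂ j, (fun x : ℕ → ℝ => x j) ⁻¹' Icc 0 1) ∩
      ⋂ j, {x | x j = gmap (n j) (x (j + 1))} := by
    ext x
    simp [Knaster]
  rw [h]
  exact (isClosed_iInter fun j => isClosed_Icc.preimage (continuous_apply j)).inter
    (isClosed_iInter fun j => isClosed_eq (continuous_apply j)
      ((continuous_gmap _).comp (continuous_apply _)))

lemma isCompact_knaster (n : ℕ → ℕ) : IsCompact (Knaster n) :=
  (isCompact_univ_pi fun _ => isCompact_Icc).of_isClosed_subset (isClosed_knaster n)
    fun _ hx => mem_univ_pi.2 hx.1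

/- The thread through `s` at level `N` is `x j = vmap (s * Q N / Q j)` with `Q j = ∏_{l < j} n l`:
it divides by the `n l` going up and applies the bonding maps going down. -/
lemma exists_mem_knaster_apply_eq {n : ℕ → ℕ} (hn : ∀ j, 0 < n j) (N : ℕ) {s : ℝ}
    (hs : s ∈ Icc (0:ℝ) 1) : ∃ x ∈ Knaster n, x N = s := by
  set Q : ℕ → ℝ := fun j => ∏ l ∈ Finset.range j, (n l : ℝ)
  have hQ : ∀ j, Q j ≠ 0 := fun j =>
    Finset.prod_ne_zero_iff.2 fun l _ => by exact_mod_cast (hn l).ne'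
  refine ⟨fun j => vmap (s * Q N / Q j), ⟨fun j => vmap_mem_Icc _, fun j => ?_⟩, ?_⟩
  · have hnj : (n j : ℝ) ≠ 0 := by exact_mod_cast (hn j).ne'
    have hQsucc : Q (j + 1) = Q j * n j := Finset.prod_range_succ _ _
    rw [gmap, vmap_natCast_mul_vmap, hQsucc]
    dsimp only
    congr 1
    field_simp
  · simp only [mul_div_cancel_right₀ s (hQ N), vmap_eq_self hs]

section knasterMap

variable {n m : ℕ → ℕ} {f : ℕ → ℝ → ℝ}

lemma comp_mem_knaster (hmaps : ∀ j, MapsTo (f j) (Icc 0 1) (Icc 0 1))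
    (hcomm : ∀ j, ∀ s ∈ Icc (0:ℝ) 1, f j (gmap (n j) s) = gmap (m j) (f (j + 1) s))
    {x : ℕ → ℝ} (hx : x ∈ Knaster n) : (fun j => f j (x j)) ∈ Knaster m :=
  ⟨fun j => hmaps j (hx.1 j), fun j => by
    simp only
    rw [hx.2 j, hcomm j _ (hx.1 (j + 1))]⟩

lemma exists_mem_knaster_comp_eq (hn : ∀ j, 0 < n j)
    (hcont : ∀ j, ContinuousOn (f j) (Icc 0 1)) (himage : ∀ j, f j '' Icc 0 1 = Icc 0 1)
    (hcomm : ∀ j, ∀ s ∈ Icc (0:ℝ) 1, f j (gmap (n j) s) = gmap (m j) (f (j + 1) s))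
    {y : ℕ → ℝ} (hy : y ∈ Knaster m) : ∃ x ∈ Knaster n, ∀ j, f j (x j) = y j := by
  set T : ℕ → Set (ℕ → ℝ) := fun N => Knaster n ∩ (fun x => f N (x N)) ⁻¹' {y N}
  have hclosed : ∀ N, IsClosed (T N) := fun N =>
    ContinuousOn.preimage_isClosed_of_isClosed
      ((hcont N).comp (continuous_apply N).continuousOn fun x hx => hx.1 N)
      (isClosed_knaster n) isClosed_singleton
  have hanti : ∀ N, T (N + 1) ⊆ T N := by
    rintro N x ⟨hx, hxN⟩
    refine ⟨hx, ?_⟩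
    simp only [mem_preimage, mem_singleton_iff] at hxN ⊢
    rw [hx.2 N, hcomm N _ (hx.1 (N + 1)), hxN, ← hy.2 N]
  have hne : ∀ N, (T N).Nonempty := by
    intro N
    obtain ⟨s, hs, hsy⟩ := (himage N).symm ▸ hy.1 N
    obtain ⟨x, hx, hxN⟩ := exists_mem_knaster_apply_eq hn N hs
    exact ⟨x, hx, by simp [hxN, hsy]⟩
  obtain ⟨x, hx⟩ := IsCompact.nonempty_iInter_of_sequence_nonempty_isCompact_isClosed T hanti
    hne ((isCompact_knaster n).of_isClosed_subset (hclosed 0) inter_subset_left) hclosed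
  rw [mem_iInter] at hx
  exact ⟨x, (hx 0).1, fun j => (hx j).2⟩

theorem exists_continuous_surjective_knaster (hn : ∀ j, 0 < n j)
    (hcont : ∀ j, ContinuousOn (f j) (Icc 0 1)) (himage : ∀ j, f j '' Icc 0 1 = Icc 0 1)
    (hcomm : ∀ j, ∀ s ∈ Icc (0:ℝ) 1, f j (gmap (n j) s) = gmap (m j) (f (j + 1) s)) :
    ∃ F : Knaster n → Knaster m, Continuous F ∧ Function.Surjective F ∧
      ∀ x j, (F x : ℕ → ℝ) j = f j ((x : ℕ → ℝ) j) := by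
  have hmaps : ∀ j, MapsTo (f j) (Icc 0 1) (Icc 0 1) := fun j =>
    mapsTo_iff_image_subset.2 (himage j).subset
  refine ⟨fun x => ⟨_, comp_mem_knaster hmaps hcomm x.2⟩, ?_, ?_, fun _ _ => rfl⟩
  · refine Continuous.subtype_mk (continuous_pi fun j => ?_) _
    exact (hcont j).comp_continuous ((continuous_apply j).comp continuous_subtype_val)
      fun x => x.2.1 j
  · rintro ⟨y, hy⟩
    obtain ⟨x, hx, hxy⟩ := exists_mem_knaster_comp_eq hn hcont himage hcomm hy
    exact ⟨⟨x, hx⟩, Subtype.ext (funext hxy)⟩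

end knasterMap

noncomputable def stageSeq (n m K : ℕ → ℕ) : ℕ → (ℝ → ℝ) × ℝ
  | 0 => (id, 1)
  | j + 1 => (nextMap (stageSeq n m K j).1 (stageSeq n m K j).2 (n j) (m j) (K j),
      nextPoint (stageSeq n m K j).2 (n j) (m j) (K j))

lemma hitsOneAt_stageSeq {n m K : ℕ → ℕ} (hm : ∀ j, 0 < m j) (hn : ∀ j, 0 < n j)
    (hK : ∀ j, Even (K j)) (hKm : ∀ j, ((K j : ℝ) + m j) / n j ≤ 1) :
    ∀ j, HitsOneAt (stageSeq n m K j).1 (stageSeq n m K j).2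
  | 0 => ⟨continuous_id, rfl, mapsTo_id _, ⟨zero_le_one, le_rfl⟩, rfl⟩
  | j + 1 => (hitsOneAt_stageSeq hm hn hK hKm j).nextMap_hitsOneAt (hm j) (hn j) (hK j) (hKm j)

-- The cap at `J - 1` puts `t = 1` into the last cell.
noncomputable def cellIndex (t : ℝ) (J : ℕ) : ℕ :=
  min ⌊t * J⌋₊ (J - 1)

lemma cellIndex_lt (t : ℝ) {J : ℕ} (hJ : 0 < J) : cellIndex t J < J := by
  unfold cellIndex
  omega

lemma mem_Icc_cellIndex {t : ℝ} (ht : t ∈ Icc (0:ℝ) 1) {J : ℕ} (hJ : 0 < J) :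
    t ∈ Icc ((cellIndex t J : ℝ) / J) ((cellIndex t J + 1) / J) := by
  have hJ' : (0 : ℝ) < J := by exact_mod_cast hJ
  have htJ : 0 ≤ t * J := mul_nonneg ht.1 hJ'.le
  rw [mem_Icc, div_le_iff₀ hJ', le_div_iff₀ hJ']
  refine ⟨(Nat.cast_le.2 (min_le_left _ _)).trans (Nat.floor_le htJ), ?_⟩
  rcases le_total ⌊t * J⌋₊ (J - 1) with h | h
  · rw [cellIndex, min_eq_left h]
    exact (Nat.lt_floor_add_one _).le
  · rw [cellIndex, min_eq_right h, Nat.cast_sub hJ, Nat.cast_one, sub_add_cancel]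
    nlinarith [ht.2]

lemma exists_even_window {i J n m : ℕ} (hJ : 0 < J) (hgrowth : (m + 2) * J < n) :
    ∃ K : ℕ, Even K ∧ (i : ℝ) / J ≤ K / n ∧ ((K : ℝ) + m) / n ≤ (i + 1) / J := by
  have hJ' : (0 : ℝ) < J := by exact_mod_cast hJ
  have hn' : (0 : ℝ) < n := by exact_mod_cast (Nat.zero_le _).trans_lt hgrowth
  have hgrowth' : ((m : ℝ) + 2) * J < n := by exact_mod_cast hgrowth
  set c := ⌈(i * n : ℝ) / (2 * J)⌉₊
  have hc₁ : (i * n : ℝ) ≤ 2 * c * J := by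
    have := Nat.le_ceil ((i * n : ℝ) / (2 * J))
    rw [div_le_iff₀ (by positivity)] at this
    linarith
  have hc₂ : 2 * c * J < (i * n : ℝ) + 2 * J := by
    have := Nat.ceil_lt_add_one (show 0 ≤ (i * n : ℝ) / (2 * J) by positivity)
    rw [← sub_lt_iff_lt_add, lt_div_iff₀ (by positivity)] at this
    linarith
  refine ⟨2 * c, even_two_mul c, ?_, ?_⟩ <;>
    rw [div_le_div_iff₀ (by positivity) (by positivity)]
  · push_cast; linarith
  · push_cast; nlinarith

theorem main_construction_general (nseq mseq : ℕ → ℕ)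
    (hm : ∀ j, 1 < mseq j)
    (hgrowth : ∀ j : ℕ, (mseq j + 2) * (j + 1) < nseq j)
    (t : ℝ) (ht : t ∈ Set.Icc (0:ℝ) 1) :
    ∃ (f : ℕ → ℝ → ℝ) (iseq : ℕ → ℕ),
      f 0 = id ∧
      (∀ j : ℕ,
        ContinuousOn (f (j + 1)) (Set.Icc 0 1) ∧
        f (j + 1) '' Set.Icc 0 1 = Set.Icc 0 1 ∧
        f (j + 1) 0 = 0 ∧
        (∀ s ∈ Set.Icc (0:ℝ) 1, f j (gmap (nseq j) s) = gmap (mseq j) (f (j + 1) s)) ∧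
        iseq (j + 1) < j + 1 ∧
        t ∈ Set.Icc ((iseq (j + 1) : ℝ) / (j + 1)) ((iseq (j + 1) + 1 : ℝ) / (j + 1)) ∧
        f (j + 1) '' Set.Icc 0 ((iseq (j + 1) : ℝ) / (j + 1)) ⊆ Set.Icc 0 (1 / (mseq j : ℝ)) ∧
        f (j + 1) '' Set.Icc ((iseq (j + 1) : ℝ) / (j + 1)) ((iseq (j + 1) + 1 : ℝ) / (j + 1)) =
          Set.Icc 0 1 ∧
        f (j + 1) '' Set.Icc ((iseq (j + 1) + 1 : ℝ) / (j + 1)) 1 ⊆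
          Set.Icc (((mseq j : ℝ) - 1) / (mseq j : ℝ)) 1) ∧
      ∃ F : Knaster nseq → Knaster mseq, Continuous F ∧ Function.Surjective F ∧
        (∀ x : Knaster nseq, ∀ j, (F x : ℕ → ℝ) j = f j ((x : ℕ → ℝ) j)) ∧
        ∀ he : (fun _ => (0:ℝ)) ∈ Knaster nseq, (F ⟨fun _ => 0, he⟩ : ℕ → ℝ) = fun _ => 0 := by
  have hn : ∀ j, 0 < nseq j := fun j => (Nat.zero_le _).trans_lt (hgrowth j)
  have hm₀ : ∀ j, 0 < mseq j := fun j => (hm j).le.trans_lt' zero_lt_one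
  choose K hKeven hKwin using fun j =>
    exists_even_window (i := cellIndex t (j + 1)) j.succ_pos (hgrowth j)
  have hcell := fun j : ℕ => mem_Icc_cellIndex ht j.succ_pos
  push_cast at hKwin hcell
  have hKm : ∀ j, ((K j : ℝ) + mseq j) / nseq j ≤ 1 := fun j => (hKwin j).2.trans <| by
    rw [div_le_one (by positivity)]; exact_mod_cast cellIndex_lt t j.succ_pos
  have hf := hitsOneAt_stageSeq hm₀ hn hKeven hKm
  have hcomm : ∀ j s, (stageSeq nseq mseq K j).1 (gmap (nseq j) s) =
      gmap (mseq j) ((stageSeq nseq mseq K (j + 1)).1 s) := fun j =>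
    (hf j).semiconj_nextMap (hm₀ j) (hKeven j)
  refine ⟨fun j => (stageSeq nseq mseq K j).1, cellIndex t, rfl, fun j =>
    ⟨(hf (j + 1)).continuous.continuousOn, (hf (j + 1)).image_Icc, (hf (j + 1)).map_zero,
      fun s _ => hcomm j s, cellIndex_lt t j.succ_pos, hcell j, ?_,
      (hf j).image_nextMap_Icc (hm₀ j) (hn j) (hKeven j) (hKwin j).1 (hKwin j).2, ?_⟩, ?_⟩
  · exact image_subset_iff.2 fun s hs =>
      (hf j).nextMap_mem_of_le (hm₀ j) (hn j) (hKeven j) (hs.2.trans (hKwin j).1)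
  · exact image_subset_iff.2 fun s hs => (hf j).nextMap_mem_of_ge (hm₀ j) (hn j)
      (((hf j).nextPoint_mem (hm₀ j)).2.trans ((hKwin j).2.trans hs.1))
  · obtain ⟨F, hFc, hFs, hF⟩ := exists_continuous_surjective_knaster hn
      (fun j => (hf j).continuous.continuousOn) (fun j => (hf j).image_Icc)
      (fun j s _ => hcomm j s)
    exact ⟨F, hFc, hFs, hF, fun _ => funext fun j => (hF _ j).trans (hf j).map_zero⟩

theorem main_construction (nseq mseq : ℕ → ℕ)
    (hn : ∀ j, 1 < nseq j) (hm : ∀ j, 1 < mseq j)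
    (hgrowth : ∀ j : ℕ, (mseq j + 2) * (j + 1) < nseq j)
    (t : ℝ) (ht : t ∈ Set.Icc (0:ℝ) 1) :
    ∃ (f : ℕ → ℝ → ℝ) (iseq : ℕ → ℕ),
      f 0 = id ∧
      (∀ j : ℕ,
        ContinuousOn (f (j + 1)) (Set.Icc 0 1) ∧
        f (j + 1) '' Set.Icc 0 1 = Set.Icc 0 1 ∧
        f (j + 1) 0 = 0 ∧
        (∀ s ∈ Set.Icc (0:ℝ) 1, f j (gmap (nseq j) s) = gmap (mseq j) (f (j + 1) s)) ∧
        iseq (j + 1) < j + 1 ∧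
        t ∈ Set.Icc ((iseq (j + 1) : ℝ) / (j + 1)) ((iseq (j + 1) + 1 : ℝ) / (j + 1)) ∧
        f (j + 1) '' Set.Icc 0 ((iseq (j + 1) : ℝ) / (j + 1)) ⊆ Set.Icc 0 (1 / (mseq j : ℝ)) ∧
        f (j + 1) '' Set.Icc ((iseq (j + 1) : ℝ) / (j + 1)) ((iseq (j + 1) + 1 : ℝ) / (j + 1)) =
          Set.Icc 0 1 ∧
        f (j + 1) '' Set.Icc ((iseq (j + 1) + 1 : ℝ) / (j + 1)) 1 ⊆
          Set.Icc (((mseq j : ℝ) - 1) / (mseq j : ℝ)) 1) ∧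
      ∃ F : Knaster nseq → Knaster mseq, Continuous F ∧ Function.Surjective F ∧
        (∀ x : Knaster nseq, ∀ j, (F x : ℕ → ℝ) j = f j ((x : ℕ → ℝ) j)) ∧
        ∀ he : (fun _ => (0:ℝ)) ∈ Knaster nseq, (F ⟨fun _ => 0, he⟩ : ℕ → ℝ) = fun _ => 0 :=
  main_construction_general nseq mseq hm hgrowth t ht
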